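/- For every k ≥ 1, the function g_k : ℕ^k → ℕ defined by g_k(x_1,...,x_k) = Σ_{j=1}^{k} h(j, x_1+...+x_j), where h(p,s) = C(s+p-1, p) (with h(p,0) = 0), is a bijection from ℕ^k to ℕ. -/

import Mathlib

/-- h(p,s) = C(s+p-1, p); note h(p,0) = C(p-1,p) = 0 for p ≥ 1. -/
def h (p s : ℕ) : ℕ := Nat.choose (s + p - 1) p

/-- g_k(x_1,…,x_k) = Σ_{j=1}^k h(j, x_1+⋯+x_j), coordinates given by x 0, x 1, …. -/
def g (k : ℕ) (x : ℕ → ℕ) : ℕ :=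
  ∑ j ∈ Finset.range k, h (j + 1) (∑ i ∈ Finset.range (j + 1), x i)

lemma h_zero {p : ℕ} (hp : 1 ≤ p) : h p 0 = 0 :=
  Nat.choose_eq_zero_of_lt (by omega)

lemma h_one (s : ℕ) : h 1 s = s := by
  simp [h, Nat.choose_one_right]

lemma h_mono (p : ℕ) : Monotone (h p) := fun a b hab =>
  Nat.choose_le_choose p (by omega)

lemma h_pascal (k a : ℕ) : h (k+1) (a+1) = h (k+1) a + h k (a+1) := by
  unfold h
  have h1 : a + 1 + (k+1) - 1 = (a + k) + 1 := by omega
  have h2 : a + (k+1) - 1 = a + k := by omega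
  have h3 : a + 1 + k - 1 = a + k := by omega
  rw [h1, h2, h3, Nat.choose_succ_succ (a+k) k]
  simp only [Nat.succ_eq_add_one]
  omega

lemma g_succ (k : ℕ) (x : ℕ → ℕ) :
    g (k+1) x = g k x + h (k+1) (∑ i ∈ Finset.range (k+1), x i) := by
  rw [g, g, Finset.sum_range_succ]

lemma g_one (x : ℕ → ℕ) : g 1 x = x 0 := by
  simp [g, h_one]

lemma g_congr {k : ℕ} {x y : ℕ → ℕ} (hxy : ∀ i < k, x i = y i) : g k x = g k y := by
  unfold g
  refine Finset.sum_congr rfl fun j hj => ?_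
  congr 1
  refine Finset.sum_congr rfl fun i hi => ?_
  simp only [Finset.mem_range] at hj hi
  exact hxy i (by omega)

lemma g_lt (k : ℕ) (hk : 1 ≤ k) (x : ℕ → ℕ) :
    g k x < h k ((∑ i ∈ Finset.range k, x i) + 1) := by
  induction k, hk using Nat.le_induction with
  | base => rw [g_one, h_one]; simp
  | succ k hk ih =>
    rw [g_succ]
    have hle : (∑ i ∈ Finset.range k, x i) ≤ ∑ i ∈ Finset.range (k+1), x i := by
      rw [Finset.sum_range_succ]; omega
    have h1 : g k x < h k ((∑ i ∈ Finset.range (k+1), x i) + 1) :=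
      lt_of_lt_of_le ih (h_mono k (by omega))
    rw [h_pascal k (∑ i ∈ Finset.range (k+1), x i)]
    omega

lemma g_inj (k : ℕ) (hk : 1 ≤ k) (x y : ℕ → ℕ) (hxy : g k x = g k y) :
    ∀ i < k, x i = y i := by
  induction k, hk using Nat.le_induction generalizing x y with
  | base =>
    intro i hi
    interval_cases i
    rw [g_one, g_one] at hxy
    exact hxy
  | succ k hk ih =>
    have hx := g_lt (k+1) (by omega) x
    have hy := g_lt (k+1) (by omega) y
    simp only [g_succ] at hxy hx hy
    set S := ∑ i ∈ Finset.range (k+1), x i with hS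
    set T := ∑ i ∈ Finset.range (k+1), y i with hT
    have hST : S = T := by
      by_contra hne
      rcases Nat.lt_or_ge S T with hlt | hlt
      · have h1 : h (k+1) (S+1) ≤ h (k+1) T := h_mono (k+1) (by omega)
        omega
      · have hlt' : T < S := by omega
        have h1 : h (k+1) (T+1) ≤ h (k+1) S := h_mono (k+1) (by omega)
        omega
    have hg : g k x = g k y := by rw [hST] at hxy; omega
    intro i hi
    rcases Nat.lt_or_ge i k with hik | hik
    · exact ih x y hg i hik
    · have hik' : i = k := by omega
      subst hik'
      have hxk : S = (∑ i ∈ Finset.range i, x i) + x i := by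
        rw [hS, Finset.sum_range_succ]
      have hyk : T = (∑ j ∈ Finset.range i, y j) + y i := by
        rw [hT, Finset.sum_range_succ]
      have hsum : (∑ j ∈ Finset.range i, x j) = ∑ j ∈ Finset.range i, y j :=
        Finset.sum_congr rfl fun j hj => ih x y hg j (Finset.mem_range.mp hj)
      omega

lemma g_surj (k : ℕ) (hk : 1 ≤ k) :
    ∀ s m : ℕ, m < h k (s+1) →
      ∃ x : ℕ → ℕ, (∀ i, k ≤ i → x i = 0) ∧ (∑ i ∈ Finset.range k, x i) ≤ s ∧ g k x = m := by
  induction k, hk using Nat.le_induction with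
  | base =>
    intro s m hm
    rw [h_one] at hm
    refine ⟨fun i => if i = 0 then m else 0, fun i hi => if_neg (by omega), ?_, by simp [g_one]⟩
    simp only [Finset.sum_range_one]
    simp
    omega
  | succ k hk ih =>
    intro s m hm
    set P : ℕ → Prop := fun a => h (k+1) a ≤ m with hP
    have hP0 : P 0 := by simp [hP, h_zero (by omega : 1 ≤ k+1)]
    set a := Nat.findGreatest P s with ha
    have has : a ≤ s := Nat.findGreatest_le s
    have hPa : h (k+1) a ≤ m := Nat.findGreatest_spec (Nat.zero_le s) hP0
    have hma : m < h (k+1) (a+1) := by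
      rcases Nat.lt_or_ge a s with hlt | hge
      · have := Nat.findGreatest_is_greatest (by omega : a < a + 1) (by omega : a + 1 ≤ s)
        simpa [hP, Nat.not_le] using this
      · have haa : a = s := by omega
        rw [haa]; exact hm
    rw [h_pascal k a] at hma
    have hr : m - h (k+1) a < h k (a+1) := by omega
    obtain ⟨x, hx0, hxs, hgx⟩ := ih a (m - h (k+1) a) hr
    set x' : ℕ → ℕ := fun i => if i = k then a - ∑ j ∈ Finset.range k, x j else x i with hx'
    have hx'lt : ∀ i < k, x' i = x i := fun i hi => by
      simp only [hx']; exact if_neg (by omega)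
    have hsum' : (∑ i ∈ Finset.range k, x' i) = ∑ i ∈ Finset.range k, x i :=
      Finset.sum_congr rfl fun i hi => hx'lt i (Finset.mem_range.mp hi)
    have hsum : (∑ i ∈ Finset.range (k+1), x' i) = a := by
      rw [Finset.sum_range_succ, hsum']
      have hxk : x' k = a - ∑ j ∈ Finset.range k, x j := by
        simp [hx']
      omega
    refine ⟨x', ?_, ?_, ?_⟩
    · intro i hi
      show x' i = 0
      have hxi : x' i = x i := by
        simp only [hx']; exact if_neg (by omega)
      rw [hxi]
      exact hx0 i (by omega)
    · rw [hsum]; exact has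
    · rw [g_succ, hsum, g_congr hx'lt, hgx]
      omega

lemma succ_le_choose (n : ℕ) : ∀ j, 1 ≤ j → n + 1 ≤ Nat.choose (n + j) j := by
  intro j hj
  induction j, hj using Nat.le_induction with
  | base => simp [Nat.choose_one_right]
  | succ j hj ihj =>
    have h1 : Nat.choose (n + j + 1) (j + 1) = Nat.choose (n+j) j + Nat.choose (n+j) (j+1) :=
      Nat.choose_succ_succ (n+j) j
    have h2 : n + (j + 1) = n + j + 1 := by omega
    rw [h2]
    omega

theorem stmt7 (k : ℕ) (hk : 1 ≤ k) :
    Function.Bijective (fun x : Fin k → ℕ =>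
      g k (fun i => if hi : i < k then x ⟨i, hi⟩ else 0)) := by
  constructor
  · intro a b hab
    have hinj := g_inj k hk _ _ hab
    funext i
    have h2 := hinj i i.isLt
    simpa [i.isLt] using h2
  · intro n
    have hbound : n < h k (n + 1) := by
      have h1 := succ_le_choose n k hk
      unfold h
      have he : n + 1 + k - 1 = n + k := by omega
      rw [he]; omega
    obtain ⟨x, hx0, hxs, hgx⟩ := g_surj k hk n n hbound
    refine ⟨fun i => x i.val, ?_⟩
    simp only
    rw [g_congr (y := x) (fun i hi => by simp [hi])]
    exact hgx
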